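/- arXiv:1812.03346 — 3 statements merged into one kernel-verified Lean document; each statement's English description precedes it below -/
import Mathlib

section
/- Let A = K⟨S⟩ be a K-algebra generated by S, M = Ax a cyclic A-module, τ : M → A a transversal (K-linear, τ(x)=1, ax = τ(ax)x), T a basis of τ(M), and σ an FSS section. Then the set U = {1} ∪ {σ(st)st : s∈S, t∈T, τ(stx)≠0} ∪ {σ(st)⁻¹ − τ(stx) : s∈S, t∈T, τ(stx)≠0} ∪ {st : s∈S, t∈T, τ(stx)=0} satisfies U ⊆ K + Ann_A(x). -/
theorem Units.mul_smul_eq_self_of_smul_eq {A M : Type*} [Monoid A] [MulAction A M]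
    {v : Aˣ} {u : A} {x : M} (h : u • x = ((v⁻¹ : Aˣ) : A) • x) : ((v : A) * u) • x = x := by
  rw [mul_smul, h, ← mul_smul, Units.mul_inv, one_smul]

theorem fss_generators_mem_general {K A M : Type*} [Field K] [Ring A] [Algebra K A]
    [AddCommGroup M] [Module K M] [Module A M] [IsScalarTower K A M]
    (S : Set A)
    (x : M)
    (τ : M →ₗ[K] A) (hτ : ∀ a : A, a • x = τ (a • x) • x)
    (T : Set A)
    (σ : A → Aˣ)
    (hσ : ∀ s ∈ S, ∀ t ∈ T, τ ((s * t) • x) ≠ 0 →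
      ((((σ (s * t))⁻¹ : Aˣ) : A) - τ ((s * t) • x)) • x = 0)
    (U : Set A)
    (hU : U = {1} ∪
      {u : A | ∃ s ∈ S, ∃ t ∈ T, τ ((s * t) • x) ≠ 0 ∧ u = ((σ (s * t) : Aˣ) : A) * (s * t)} ∪
      {u : A | ∃ s ∈ S, ∃ t ∈ T, τ ((s * t) • x) ≠ 0 ∧
        u = (((σ (s * t))⁻¹ : Aˣ) : A) - τ ((s * t) • x)} ∪
      {u : A | ∃ s ∈ S, ∃ t ∈ T, τ ((s * t) • x) = 0 ∧ u = s * t}) :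
    ∀ u ∈ U, ∃ c : K, (u - algebraMap K A c) • x = 0 := by
  subst hU
  rintro u (((rfl | ⟨s, hs, t, ht, hne, rfl⟩) | ⟨s, hs, t, ht, hne, rfl⟩) | ⟨s, hs, t, ht, hzero, rfl⟩)
  · exact ⟨1, by simp⟩
  · -- `(s * t) • x = τ ((s * t) • x) • x = σ(st)⁻¹ • x`, so `σ(st) * (s * t)` fixes `x`
    have hinv := hσ s hs t ht hne
    rw [sub_smul, sub_eq_zero, ← hτ] at hinv
    exact ⟨1, by rw [map_one, sub_smul, Units.mul_smul_eq_self_of_smul_eq hinv.symm, one_smul,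
      sub_self]⟩
  · exact ⟨0, by simpa using hσ s hs t ht hne⟩
  · exact ⟨0, by simpa [hzero] using hτ (s * t)⟩

/-- The Frobenius–Schreier–Sims generators `U(S,T,σ,τ)` all lie in `K + Ann_A(x)`. -/
theorem fss_generators_mem {K A M : Type*} [Field K] [Ring A] [Algebra K A]
    [AddCommGroup M] [Module K M] [Module A M] [IsScalarTower K A M]
    (S : Set A) (hS : Algebra.adjoin K S = ⊤)
    (x : M) (hcyc : ∀ m : M, ∃ a : A, a • x = m)
    (τ : M →ₗ[K] A) (hτx : τ x = 1) (hτ : ∀ a : A, a • x = τ (a • x) • x)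
    (T : Set A) (hTsub : ∀ t ∈ T, t ∈ LinearMap.range τ)
    (hTspan : Submodule.span K T = LinearMap.range τ)
    (hTind : LinearIndependent K (fun t : T => (t : A)))
    (σ : A → Aˣ)
    (hσ : ∀ s ∈ S, ∀ t ∈ T, τ ((s * t) • x) ≠ 0 →
      ((((σ (s * t))⁻¹ : Aˣ) : A) - τ ((s * t) • x)) • x = 0)
    (U : Set A)
    (hU : U = {1} ∪
      {u : A | ∃ s ∈ S, ∃ t ∈ T, τ ((s * t) • x) ≠ 0 ∧ u = ((σ (s * t) : Aˣ) : A) * (s * t)} ∪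
      {u : A | ∃ s ∈ S, ∃ t ∈ T, τ ((s * t) • x) ≠ 0 ∧
        u = (((σ (s * t))⁻¹ : Aˣ) : A) - τ ((s * t) • x)} ∪
      {u : A | ∃ s ∈ S, ∃ t ∈ T, τ ((s * t) • x) = 0 ∧ u = s * t}) :
    ∀ u ∈ U, ∃ c : K, (u - algebraMap K A c) • x = 0 :=
  fss_generators_mem_general S x τ hτ T σ hσ U hU
end

section
/- With the FSS data (S, T, σ, τ) as above and U = U(S,T,σ,τ), every element a ∈ A can be written as a = Σ_i λ_i t_i u_{i1}⋯u_{iℓ(i)} with λ_i ∈ K, t_i ∈ T, and u_{ij} ∈ U. Consequently the K-linear map Ax ⊗_K K⟨U⟩ → A given on pure tensors by (ax) ⊗ b ↦ τ(ax)·b is surjective. -/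
/-!
Let `V` be the `K`-span of the products `t * u` with `t ∈ T` and `u` in the monoid generated
by `U`. It contains `1`, and `s·V ⊆ V` for every `s ∈ S`: if `τ(stx) = 0` then `st ∈ U`;
otherwise, with `c = σ(st)`,
  `st·u = (c⁻¹ - τ(stx)) · (c·st·u) + τ(stx) · (c·st·u)`,
where `c⁻¹ - τ(stx)` and `c·st` lie in `U` and `τ(stx) ∈ τ(M) = span T`.
As `S` generates `A`, `V` is stable under left multiplication by all of `A`, so `V = A`.
The image of `Γ` is at least `τ(M) · K⟨U⟩ ⊇ V`.
-/

open Submodule Pointwise TensorProduct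

theorem Submodule.span_eq_top_of_one_mem_of_mul_mem {K A : Type*} [CommSemiring K] [Semiring A]
    [Algebra K A] {S G : Set A} (hS : Algebra.adjoin K S = ⊤) (h1 : 1 ∈ span K G)
    (hmul : ∀ s ∈ S, ∀ g ∈ G, s * g ∈ span K G) : span K G = ⊤ := by
  have hstable : ∀ a : A, ∀ v ∈ span K G, a * v ∈ span K G := by
    intro a
    refine Algebra.adjoin_induction (p := fun a _ => ∀ v ∈ span K G, a * v ∈ span K G)
      (fun s hs =>
        (span_le.mpr (hmul s hs) : span K G ≤ (span K G).comap (LinearMap.mulLeft K s)))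
      (fun r v hv => (Algebra.smul_def r v).symm ▸ smul_mem _ r hv)
      (fun a b _ _ ha hb v hv => (add_mul a b v).symm ▸ add_mem (ha v hv) (hb v hv))
      (fun a b _ _ ha hb v hv => (mul_assoc a b v).symm ▸ ha _ (hb v hv))
      (hS ▸ Algebra.mem_top : a ∈ Algebra.adjoin K S)
  exact eq_top_iff.mpr fun a _ => mul_one a ▸ hstable a 1 h1

theorem LinearMap.mul_range_le_range_lift {K A M N : Type*} [CommSemiring K] [Semiring A]
    [Algebra K A] [AddCommMonoid M] [Module K M] [AddCommMonoid N] [Module K N]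
    (f : M →ₗ[K] A) (g : N →ₗ[K] A) :
    range f * range g ≤ range (lift ((LinearMap.mul K A).compl₁₂ f g)) := by
  rw [Submodule.mul_le]
  rintro _ ⟨m, rfl⟩ _ ⟨n, rfl⟩
  exact ⟨m ⊗ₜ n, rfl⟩

section SpanMulClosure

variable {K A : Type*} [CommSemiring K] [Ring A] [Algebra K A] {T U : Set A}

theorem mem_span_mul_closure_of_mem_closure (h1T : (1 : A) ∈ T) {v : A}
    (hv : v ∈ Submonoid.closure U) : v ∈ span K (T * (Submonoid.closure U : Set A)) :=
  subset_span ⟨1, h1T, v, hv, one_mul v⟩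

theorem mul_mem_span_mul_closure_of_mem (h1T : (1 : A) ∈ T) {s t u : A} (hst : s * t ∈ U)
    (hu : u ∈ Submonoid.closure U) : s * (t * u) ∈ span K (T * (Submonoid.closure U : Set A)) :=
  mul_assoc s t u ▸
    mem_span_mul_closure_of_mem_closure h1T (mul_mem (Submonoid.subset_closure hst) hu)

theorem mul_mem_span_mul_closure_of_units (h1T : (1 : A) ∈ T) {s t u r : A} (c : Aˣ)
    (hc : (c : A) * (s * t) ∈ U) (hr : r ∈ span K T) (hcr : ((c⁻¹ : Aˣ) : A) - r ∈ U)
    (hu : u ∈ Submonoid.closure U) : s * (t * u) ∈ span K (T * (Submonoid.closure U : Set A)) := by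
  have hv : (c : A) * (s * t) * u ∈ Submonoid.closure U :=
    mul_mem (Submonoid.subset_closure hc) hu
  have hsplit : s * (t * u) =
      (((c⁻¹ : Aˣ) : A) - r) * ((c : A) * (s * t) * u) + r * ((c : A) * (s * t) * u) := by
    rw [← add_mul, sub_add_cancel, mul_assoc, Units.inv_mul_cancel_left, mul_assoc]
  rw [hsplit]
  refine add_mem ?_ ?_
  · exact mem_span_mul_closure_of_mem_closure h1T (mul_mem (Submonoid.subset_closure hcr) hv)
  · rw [← span_mul_span]
    exact mul_mem_mul hr (subset_span hv)

end SpanMulClosure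

theorem fss_decomposition_general {K A M : Type*} [Field K] [Ring A] [Algebra K A]
    [AddCommGroup M] [Module K M] [Module A M]
    (S : Set A) (hS : Algebra.adjoin K S = ⊤)
    (x : M)
    (τ : M →ₗ[K] A)
    (T : Set A) (h1T : (1 : A) ∈ T)
    (hTspan : Submodule.span K T = LinearMap.range τ)
    (σ : A → Aˣ)
    (U : Set A)
    (hU : U = {1} ∪
      {u : A | ∃ s ∈ S, ∃ t ∈ T, τ ((s * t) • x) ≠ 0 ∧ u = ((σ (s * t) : Aˣ) : A) * (s * t)} ∪
      {u : A | ∃ s ∈ S, ∃ t ∈ T, τ ((s * t) • x) ≠ 0 ∧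
        u = (((σ (s * t))⁻¹ : Aˣ) : A) - τ ((s * t) • x)} ∪
      {u : A | ∃ s ∈ S, ∃ t ∈ T, τ ((s * t) • x) = 0 ∧ u = s * t}) :
    (∀ a : A, a ∈ Submodule.span K
        {y : A | ∃ t ∈ T, ∃ u ∈ Submonoid.closure U, y = t * u}) ∧
    ∃ Γ : TensorProduct K M (Algebra.adjoin K U) →ₗ[K] A,
      (∀ (m : M) (b : Algebra.adjoin K U), Γ (m ⊗ₜ[K] b) = τ m * (b : A)) ∧
      Function.Surjective Γ := by
  have hspan : span K (T * (Submonoid.closure U : Set A)) = ⊤ := by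
    refine span_eq_top_of_one_mem_of_mul_mem hS
      (mem_span_mul_closure_of_mem_closure h1T (one_mem _)) ?_
    rintro s hs _ ⟨t, ht, u, hu, rfl⟩
    by_cases h0 : τ ((s * t) • x) = 0
    · refine mul_mem_span_mul_closure_of_mem h1T ?_ hu
      rw [hU]
      exact Or.inr ⟨s, hs, t, ht, h0, rfl⟩
    · refine mul_mem_span_mul_closure_of_units h1T (σ (s * t)) ?_
        (hTspan ▸ LinearMap.mem_range_self τ ((s * t) • x)) ?_ hu <;> rw [hU]
      · exact Or.inl (Or.inl (Or.inr ⟨s, hs, t, ht, h0, rfl⟩))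
      · exact Or.inl (Or.inr ⟨s, hs, t, ht, h0, rfl⟩)
  refine ⟨fun a => ?_, lift ((LinearMap.mul K A).compl₁₂ τ (Algebra.adjoin K U).val.toLinearMap),
    fun m b => rfl, ?_⟩
  · have hG : {y : A | ∃ t ∈ T, ∃ u ∈ Submonoid.closure U, y = t * u} =
        T * (Submonoid.closure U : Set A) := by
      ext
      simp only [Set.mem_ofPred_eq, Set.mem_mul, SetLike.mem_coe, eq_comm]
    rw [hG, hspan]
    exact mem_top
  · rw [← LinearMap.range_eq_top, eq_top_iff, ← hspan, ← span_mul_span, hTspan]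
    refine le_trans (mul_le_mul' le_rfl fun b hb => ?_) (LinearMap.mul_range_le_range_lift _ _)
    rw [← Algebra.adjoin_eq_span] at hb
    exact ⟨⟨b, hb⟩, rfl⟩

/-- Every `a ∈ A` is a `K`-linear combination of products `t · u₁ ⋯ u_ℓ` with `t ∈ T` and
`u_j` FSS generators; consequently the `K`-linear map `Ax ⊗_K K⟨U⟩ → A`,
`(a • x) ⊗ b ↦ τ(a • x) * b`, is surjective. -/
theorem fss_decomposition {K A M : Type*} [Field K] [Ring A] [Algebra K A]
    [AddCommGroup M] [Module K M] [Module A M] [IsScalarTower K A M]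
    (S : Set A) (hS : Algebra.adjoin K S = ⊤)
    (x : M) (hcyc : ∀ m : M, ∃ a : A, a • x = m)
    (τ : M →ₗ[K] A) (hτx : τ x = 1) (hτ : ∀ a : A, a • x = τ (a • x) • x)
    (T : Set A) (h1T : (1 : A) ∈ T) (hTsub : ∀ t ∈ T, t ∈ LinearMap.range τ)
    (hTspan : Submodule.span K T = LinearMap.range τ)
    (hTind : LinearIndependent K (fun t : T => (t : A)))
    (σ : A → Aˣ)
    (hσ : ∀ s ∈ S, ∀ t ∈ T, τ ((s * t) • x) ≠ 0 →
      ((((σ (s * t))⁻¹ : Aˣ) : A) - τ ((s * t) • x)) • x = 0)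
    (U : Set A)
    (hU : U = {1} ∪
      {u : A | ∃ s ∈ S, ∃ t ∈ T, τ ((s * t) • x) ≠ 0 ∧ u = ((σ (s * t) : Aˣ) : A) * (s * t)} ∪
      {u : A | ∃ s ∈ S, ∃ t ∈ T, τ ((s * t) • x) ≠ 0 ∧
        u = (((σ (s * t))⁻¹ : Aˣ) : A) - τ ((s * t) • x)} ∪
      {u : A | ∃ s ∈ S, ∃ t ∈ T, τ ((s * t) • x) = 0 ∧ u = s * t}) :
    (∀ a : A, a ∈ Submodule.span K
        {y : A | ∃ t ∈ T, ∃ u ∈ Submonoid.closure U, y = t * u}) ∧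
    ∃ Γ : TensorProduct K M (Algebra.adjoin K U) →ₗ[K] A,
      (∀ (m : M) (b : Algebra.adjoin K U), Γ (m ⊗ₜ[K] b) = τ m * (b : A)) ∧
      Function.Surjective Γ :=
  fss_decomposition_general S hS x τ T h1T hTspan σ U hU
end

section
/- Let A be a K-algebra with a chain of subalgebras A = A₀ > A₁ > ⋯ > A_ℓ, elements x₁,…,x_ℓ of an A-module M, and K-linear surjections A_{i−1}x_i ⊗_K A_i → A_{i−1} for each i. Then there is a K-linear surjection A₀x₁ ⊗ ⋯ ⊗ A_{ℓ−1}x_ℓ ⊗ A_ℓ → A, and hence dim_K A ≤ (∏_{i=1}^{ℓ} dim_K A_{i−1}x_i) · dim_K A_ℓ when all these spaces are finite dimensional. -/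
open scoped TensorProduct
open PiTensorProduct Module

/-!
Splitting off the first factor, `(⨂ᵢ Vᵢ) ⊗ N_ℓ ≅ V₀ ⊗ ((⨂_{i>0} Vᵢ) ⊗ N_ℓ)`; by induction along the
chain the inner factor maps onto `N₁`, and `f₀ : V₀ ⊗ N₁ → N₀` finishes, since tensoring preserves
surjectivity. The dimension bound follows because `finrank` is multiplicative on tensor products.
-/

namespace PiTensorProduct

variable {R : Type*} [CommSemiring R]

noncomputable def finSuccEquiv {n : ℕ} (s : Fin (n + 1) → Type*)
    [∀ i, AddCommMonoid (s i)] [∀ i, Module R (s i)] :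
    (⨂[R] i, s i) ≃ₗ[R] s 0 ⊗[R] (⨂[R] i : Fin n, s i.succ) :=
  LinearEquiv.ofLinearMap
    (lift <| LinearMap.uncurryLeft
      { toFun := fun x => (TensorProduct.mk R _ _ x).compMultilinearMap (tprod R)
        map_add' := fun a b => by ext; simp
        map_smul' := fun c a => by ext; simp [TensorProduct.smul_tmul'] })
    (TensorProduct.lift <| (lift (R := R) (s := fun i : Fin n => s i.succ)).toLinearMap ∘ₗ
      (tprod R (s := s)).curryLeft)
    (by ext; simp [LinearMap.uncurryLeft_apply])
    (by ext; simp [LinearMap.uncurryLeft_apply, Fin.cons_self_tail])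

theorem finrank_eq_prod {K ι : Type*} [Field K] [Fintype ι] (V : ι → Type*)
    [∀ i, AddCommGroup (V i)] [∀ i, Module K (V i)] [∀ i, FiniteDimensional K (V i)] :
    finrank K (⨂[K] i, V i) = ∏ i, finrank K (V i) := by
  classical
  rw [finrank_eq_card_basis (Basis.piTensorProduct fun i => finBasis K (V i)),
    Fintype.card_pi]
  simp

end PiTensorProduct

theorem exists_surjective_of_tensor_chain {R : Type*} [CommSemiring R] {n : ℕ}
    (V : Fin n → Type*) (N : Fin (n + 1) → Type*)
    [∀ i, AddCommMonoid (V i)] [∀ i, Module R (V i)]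
    [∀ i, AddCommMonoid (N i)] [∀ i, Module R (N i)]
    (f : ∀ i, V i ⊗[R] N i.succ →ₗ[R] N i.castSucc) (hf : ∀ i, Function.Surjective (f i)) :
    ∃ g : (⨂[R] i, V i) ⊗[R] N (Fin.last n) →ₗ[R] N 0, Function.Surjective g := by
  induction n with
  | zero =>
    let e := (isEmptyEquiv (s := V) (Fin 0)).rTensor (N 0) ≪≫ₗ TensorProduct.lid R (N 0)
    exact ⟨e.toLinearMap, e.surjective⟩
  | succ n ih =>
    obtain ⟨g, hg⟩ := ih (fun i => V i.succ) (fun i => N i.succ) (fun i => f i.succ)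
      (fun i => hf i.succ)
    let e := (finSuccEquiv V).rTensor (N (Fin.last (n + 1))) ≪≫ₗ TensorProduct.assoc R _ _ _
    exact ⟨f 0 ∘ₗ g.lTensor (V 0) ∘ₗ e.toLinearMap,
      (hf 0).comp ((LinearMap.lTensor_surjective _ hg).comp e.surjective)⟩

theorem chain_tensor_surjection_general {K A M : Type*} [Field K] [Ring A] [Algebra K A]
    [AddCommGroup M] [Module K M] [FiniteDimensional K A] [FiniteDimensional K M]
    (ℓ : ℕ) (A_ : Fin (ℓ + 1) → Subalgebra K A)
    (htop : A_ 0 = ⊤) (C : Fin ℓ → Submodule K M)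
    (f : ∀ i : Fin ℓ, TensorProduct K (C i) (A_ i.succ) →ₗ[K] (A_ i.castSucc))
    (hf : ∀ i : Fin ℓ, Function.Surjective (f i)) :
    (∃ g : TensorProduct K (⨂[K] i : Fin ℓ, C i) (A_ (Fin.last ℓ)) →ₗ[K] A,
        Function.Surjective g) ∧
    Module.finrank K A ≤
      (∏ i : Fin ℓ, Module.finrank K (C i)) * Module.finrank K (A_ (Fin.last ℓ)) := by
  obtain ⟨g, hg⟩ := exists_surjective_of_tensor_chain (fun i => C i) (fun i => A_ i) f hf
  let e : A_ 0 ≃ₗ[K] A := (Subalgebra.equivOfEq _ _ htop |>.trans Subalgebra.topEquiv).toLinearEquiv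
  have hsurj : Function.Surjective (e.toLinearMap ∘ₗ g) := e.surjective.comp hg
  refine ⟨⟨_, hsurj⟩, ?_⟩
  calc finrank K A ≤ finrank K ((⨂[K] i : Fin ℓ, C i) ⊗[K] A_ (Fin.last ℓ)) :=
        LinearMap.finrank_le_finrank_of_surjective hsurj
    _ = (∏ i : Fin ℓ, finrank K (C i)) * finrank K (A_ (Fin.last ℓ)) := by
        rw [finrank_tensorProduct, PiTensorProduct.finrank_eq_prod]

/-- Given a chain of subalgebras `A = A₀ > A₁ > ⋯ > A_ℓ`, cyclic modules
`M_i = A_{i-1} x_i`, and `K`-linear surjections `A_{i-1}x_i ⊗ A_i → A_{i-1}`, there is a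
`K`-linear surjection `A₀x₁ ⊗ ⋯ ⊗ A_{ℓ-1}x_ℓ ⊗ A_ℓ → A`, whence
`dim A ≤ (∏ dim A_{i-1}x_i) · dim A_ℓ`. -/
theorem chain_tensor_surjection {K A M : Type*} [Field K] [Ring A] [Algebra K A]
    [AddCommGroup M] [Module K M] [Module A M] [IsScalarTower K A M]
    [FiniteDimensional K A] [FiniteDimensional K M]
    (ℓ : ℕ) (A_ : Fin (ℓ + 1) → Subalgebra K A)
    (htop : A_ 0 = ⊤) (hchain : StrictAnti A_)
    (x : Fin ℓ → M) (C : Fin ℓ → Submodule K M)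
    (hC : ∀ i : Fin ℓ, (C i : Set M) = {m : M | ∃ a ∈ A_ i.castSucc, m = a • x i})
    (f : ∀ i : Fin ℓ, TensorProduct K (C i) (A_ i.succ) →ₗ[K] (A_ i.castSucc))
    (hf : ∀ i : Fin ℓ, Function.Surjective (f i)) :
    (∃ g : TensorProduct K (⨂[K] i : Fin ℓ, C i) (A_ (Fin.last ℓ)) →ₗ[K] A,
        Function.Surjective g) ∧
    Module.finrank K A ≤
      (∏ i : Fin ℓ, Module.finrank K (C i)) * Module.finrank K (A_ (Fin.last ℓ)) :=
  chain_tensor_surjection_general ℓ A_ htop C f hf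
end
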